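/- arXiv:2604.20253 — 2 statements merged into one kernel-verified Lean document; each statement's English description precedes it below -/
import Mathlib

section
/- Let F be a subformula-closed set of CTL formulas. A model M over F is consistent if and only if M ⊑ N for some proof ⟨N,π⟩ over F. -/
namespace CTLviz

/-- CTL formulas over basic propositions from `P`, generated by the core grammar
`φ ::= p | ⊤ | ¬ψ | ψ₁∨ψ₂ | EX ψ | E[ψ₁ U ψ₂] | EG ψ`. -/
inductive Formula (P : Type) : Type where
  | prop : P → Formula P
  | tt : Formula P
  | neg : Formula P → Formula P
  | or : Formula P → Formula P → Formula P
  | EX : Formula P → Formula P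
  | EU : Formula P → Formula P → Formula P
  | EG : Formula P → Formula P

namespace Formula

variable {P : Type}

/-- The set of immediate subformulas. -/
def children : Formula P → Set (Formula P)
  | .prop _ => ∅
  | .tt => ∅
  | .neg ψ => {ψ}
  | .or ψ₁ ψ₂ => {ψ₁, ψ₂}
  | .EX ψ => {ψ}
  | .EU ψ₁ ψ₂ => {ψ₁, ψ₂}
  | .EG ψ => {ψ}

/-- Compound formulas are those that are not basic propositions. -/
def Compound : Formula P → Prop
  | .prop _ => False
  | _ => True

/-- Formulas in which the only operators occurring are ¬, ∨ and EU. -/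
def OnlyNegOrEU : Formula P → Prop
  | .prop _ => True
  | .tt => False
  | .neg ψ => ψ.OnlyNegOrEU
  | .or ψ₁ ψ₂ => ψ₁.OnlyNegOrEU ∧ ψ₂.OnlyNegOrEU
  | .EX _ => False
  | .EU ψ₁ ψ₂ => ψ₁.OnlyNegOrEU ∧ ψ₂.OnlyNegOrEU
  | .EG _ => False

/-- The list of occurrences of basic propositions in a formula. -/
def props : Formula P → List P
  | .prop p => [p]
  | .tt => []
  | .neg ψ => ψ.props
  | .or ψ₁ ψ₂ => ψ₁.props ++ ψ₂.props
  | .EX ψ => ψ.props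
  | .EU ψ₁ ψ₂ => ψ₁.props ++ ψ₂.props
  | .EG ψ => ψ.props

/-- EU- and EG-formulas. -/
def IsEUorEG : Formula P → Prop
  | .EU _ _ => True
  | .EG _ => True
  | _ => False

end Formula

/-- A set of formulas is subformula-closed if it contains all immediate
subformulas of its members. -/
def SubformulaClosed {P : Type} (F : Set (Formula P)) : Prop :=
  ∀ φ ∈ F, Formula.children φ ⊆ F

/-- Finite or infinite sequences over `σ`: `get n = some a` means that position `n`
(0-based) holds `a`; the domain is downward closed.  Infinite sequences are
everywhere defined, finite ones are eventually `none`. -/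
structure FSeq (σ : Type) : Type where
  get : ℕ → Option σ
  down : ∀ n, get n = none → get (n + 1) = none

theorem FSeq.ext' {σ : Type} {ρ ρ' : FSeq σ} (h : ∀ n, ρ.get n = ρ'.get n) : ρ = ρ' := by
  cases ρ with
  | mk g d =>
    cases ρ' with
    | mk g' d' =>
      have hg : g = g' := funext h
      subst hg
      rfl

/-- `ρ.IsPrefix ρ'` : the sequence `ρ` is a prefix of `ρ'`. -/
def FSeq.IsPrefix {σ : Type} (ρ ρ' : FSeq σ) : Prop :=
  ∀ n a, ρ.get n = some a → ρ'.get n = some a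

/-- All elements of the sequence lie in `Z`. -/
def SeqAll {σ : Type} (Z : Set σ) (ρ : FSeq σ) : Prop :=
  ∀ n a, ρ.get n = some a → a ∈ Z

/-- A relation is acyclic if no element is related to itself by the
transitive closure of the relation. -/
def Acyclic {σ : Type} (R : Set (σ × σ)) : Prop :=
  ∀ a, ¬ Relation.TransGen (fun x y => (x, y) ∈ R) a a

/-- The relation `<ρ` linking consecutive elements of a (finite) sequence,
here given as a list. -/
def ListConsec {σ : Type} (l : List σ) : Set (σ × σ) :=
  {p | ∃ i, l[i]? = some p.1 ∧ l[i + 1]? = some p.2}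

/-- A model over a set `F` of formulas: a countable set `S` of states taken from the
universe `σ`, a subset `C ⊆ S` of closed states, a transition relation `R ⊆ S×S` and
a partial labelling `L : S × F ⇀ Bool` (encoded via `Option Bool`). -/
structure Model (σ P : Type) (F : Set (Formula P)) : Type where
  S : Set σ
  C : Set σ
  R : Set (σ × σ)
  L : σ → Formula P → Option Bool
  countable_S : S.Countable
  C_sub : C ⊆ S
  R_sub : ∀ p ∈ R, p.1 ∈ S ∧ p.2 ∈ S
  L_dom : ∀ s φ, L s φ ≠ none → s ∈ S ∧ φ ∈ F

namespace Model

variable {σ P : Type} {F : Set (Formula P)}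

/-- Direct successors of a state. -/
def succ (M : Model σ P F) (s : σ) : Set σ := {t | (s, t) ∈ M.R}

/-- The R-maximal (terminal) states, i.e. those without outgoing transitions. -/
def terminal (M : Model σ P F) : Set σ := {a ∈ M.S | ∀ b, (a, b) ∉ M.R}

/-- A (finite or infinite) path from `s`: consecutive elements are R-related. -/
def IsPath (M : Model σ P F) (s : σ) (ρ : FSeq σ) : Prop :=
  ρ.get 0 = some s ∧
  (∀ n a, ρ.get n = some a → a ∈ M.S) ∧
  (∀ n a b, ρ.get n = some a → ρ.get (n + 1) = some b → (a, b) ∈ M.R)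

/-- A maximal path from `s`: a path that is not a proper prefix of another path. -/
def IsMaxPath (M : Model σ P F) (s : σ) (ρ : FSeq σ) : Prop :=
  M.IsPath s ρ ∧ ∀ ρ', M.IsPath s ρ' → ρ.IsPrefix ρ' → ρ' = ρ

/-- A model is full if all its states are closed and its labelling is total on `S × F`. -/
def Full (M : Model σ P F) : Prop :=
  M.C = M.S ∧ ∀ s ∈ M.S, ∀ φ ∈ F, M.L s φ ≠ none

/-- Standard CTL satisfaction (used on full models). -/
def Sat (M : Model σ P F) : Formula P → σ → Prop
  | .prop p, s => M.L s (.prop p) = some true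
  | .tt, _ => True
  | .neg ψ, s => ¬ Sat M ψ s
  | .or ψ₁ ψ₂, s => Sat M ψ₁ s ∨ Sat M ψ₂ s
  | .EX ψ, s => ∃ t ∈ M.succ s, Sat M ψ t
  | .EU ψ₁ ψ₂, s => ∃ ρ, M.IsMaxPath s ρ ∧ ∃ n b, ρ.get n = some b ∧ Sat M ψ₂ b ∧
      ∀ i < n, ∀ a, ρ.get i = some a → Sat M ψ₁ a
  | .EG ψ, s => ∃ ρ, M.IsMaxPath s ρ ∧ ∀ n a, ρ.get n = some a → Sat M ψ a

/-- A model is sound if it is full and its labelling agrees with satisfaction. -/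
def Sound (M : Model σ P F) : Prop :=
  M.Full ∧ ∀ s ∈ M.S, ∀ φ ∈ F, (M.L s φ = some true ↔ M.Sat φ s)

end Model

/-- The submodel relation `⊑`: componentwise inclusion, where moreover every
transition of `M₂` missing in `M₁` starts outside the closed states of `M₁`. -/
def Submodel {σ P : Type} {F : Set (Formula P)} (M₁ M₂ : Model σ P F) : Prop :=
  M₁.S ⊆ M₂.S ∧ M₁.C ⊆ M₂.C ∧ M₁.R ⊆ M₂.R ∧
  (∀ s φ b, M₁.L s φ = some b → M₂.L s φ = some b) ∧
  ∀ p ∈ M₂.R, p ∉ M₁.R → p.1 ∉ M₁.C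

/-- Proper submodels. -/
def ProperSubmodel {σ P : Type} {F : Set (Formula P)} (M₁ M₂ : Model σ P F) : Prop :=
  Submodel M₁ M₂ ∧ ¬ Submodel M₂ M₁

/-- A model is consistent if it has a sound supermodel. -/
def Consistent {σ P : Type} {F : Set (Formula P)} (M : Model σ P F) : Prop :=
  ∃ N : Model σ P F, N.Sound ∧ Submodel M N

/-- A consistent model `M` is evidence for the assertion `(s, φ, b)` if its labelling
domain is contained in `S × children(φ)` and every sound supermodel `N ⊒ M` has
`L_N(s,φ) = b`. -/
def Evidence {σ P : Type} {F : Set (Formula P)} (M : Model σ P F)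
    (s : σ) (φ : Formula P) (b : Bool) : Prop :=
  Consistent M ∧ (∀ t ψ, M.L t ψ ≠ none → ψ ∈ Formula.children φ) ∧
  ∀ N : Model σ P F, N.Sound → Submodel M N → N.L s φ = some b

/-- A witness for `(s, φ)` is evidence for `(s, φ, true)`. -/
def Witness {σ P : Type} {F : Set (Formula P)} (M : Model σ P F)
    (s : σ) (φ : Formula P) : Prop :=
  Evidence M s φ true

/-- A counterexample for `(s, φ)` is evidence for `(s, φ, false)`. -/
def Counterexample {σ P : Type} {F : Set (Formula P)} (M : Model σ P F)
    (s : σ) (φ : Formula P) : Prop :=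
  Evidence M s φ false

namespace Model

variable {σ P : Type} {F : Set (Formula P)}

/-- The witness condition `W_M(s,φ)` (Table 1); arbitrary (`False`) on basic propositions. -/
def W (M : Model σ P F) (s : σ) : Formula P → Prop
  | .prop _ => False
  | .tt => True
  | .neg ψ => M.L s ψ = some false
  | .or ψ₁ ψ₂ => M.L s ψ₁ = some true ∨ M.L s ψ₂ = some true
  | .EX ψ => ∃ t ∈ M.succ s, M.L t ψ = some true
  | .EU ψ₁ ψ₂ => ∃ ρ, M.IsMaxPath s ρ ∧ ∃ n b, ρ.get n = some b ∧ M.L b ψ₂ = some true ∧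
      ∀ i < n, ∀ a, ρ.get i = some a → M.L a ψ₁ = some true
  | .EG ψ => ∃ ρ, M.IsMaxPath s ρ ∧ (∀ n a, ρ.get n = some a → M.L a ψ = some true) ∧
      ∀ n a, ρ.get n = some a → ρ.get (n + 1) = none → a ∈ M.C

/-- The counterexample condition `C_M(s,φ)` (Table 1); arbitrary (`False`) on basic
propositions. -/
def Cc (M : Model σ P F) (s : σ) : Formula P → Prop
  | .prop _ => False
  | .tt => False
  | .neg ψ => M.L s ψ = some true
  | .or ψ₁ ψ₂ => M.L s ψ₁ = some false ∧ M.L s ψ₂ = some false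
  | .EX ψ => s ∈ M.C ∧ ∀ t ∈ M.succ s, M.L t ψ = some false
  | .EU ψ₁ ψ₂ => ∀ ρ, M.IsMaxPath s ρ →
      ((∀ n a, ρ.get n = some a → a ∈ M.C ∧ M.L a ψ₂ = some false) ∨
        ∃ n b, ρ.get n = some b ∧ M.L b ψ₁ = some false ∧ M.L b ψ₂ = some false ∧
          ∀ i < n, ∀ a, ρ.get i = some a → a ∈ M.C ∧ M.L a ψ₂ = some false)
  | .EG ψ => ∀ ρ, M.IsMaxPath s ρ →
      ∃ n b, ρ.get n = some b ∧ M.L b ψ = some false ∧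
        ∀ i < n, ∀ a, ρ.get i = some a → a ∈ M.C

/-- The minimal-witness condition `mW_M(s,φ)` (Table 2). -/
def mW (M : Model σ P F) (s : σ) : Formula P → Prop
  | .prop _ => False
  | .tt => M.S = {s} ∧ M.C = ∅ ∧ M.R = ∅ ∧ ∀ t ξ, M.L t ξ = none
  | .neg ψ => M.S = {s} ∧ M.C = ∅ ∧ M.R = ∅ ∧
      ∀ t ξ b, M.L t ξ = some b ↔ t = s ∧ ξ = ψ ∧ b = false
  | .or ψ₁ ψ₂ => M.S = {s} ∧ M.C = ∅ ∧ M.R = ∅ ∧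
      ((∀ t ξ b, M.L t ξ = some b ↔ t = s ∧ ξ = ψ₁ ∧ b = true) ∨
        ∀ t ξ b, M.L t ξ = some b ↔ t = s ∧ ξ = ψ₂ ∧ b = true)
  | .EX ψ => ∃ s', M.S = {s, s'} ∧ M.C = ∅ ∧ M.R = {(s, s')} ∧
      ∀ t ξ b, M.L t ξ = some b ↔ t = s' ∧ ξ = ψ ∧ b = true
  | .EU ψ₁ ψ₂ => ∃ l : List σ, l ≠ [] ∧ l.head? = some s ∧ l.Nodup ∧
      M.S = {a | a ∈ l} ∧ M.C = ∅ ∧ M.R = ListConsec l ∧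
      ∀ t ξ b, M.L t ξ = some b ↔
        b = true ∧ ((t ∈ l.dropLast ∧ ξ = ψ₁) ∨ (l.getLast? = some t ∧ ξ = ψ₂))
  | .EG ψ => ∃ ρ : FSeq σ, ρ.get 0 = some s ∧
      (∀ i j a, i < j → ρ.get i = some a → ρ.get j = some a → ρ.get (j + 1) = none) ∧
      M.S = {a | ∃ n, ρ.get n = some a} ∧
      M.C = {a | (∃ n, ρ.get n = some a) ∧ ∀ n, ρ.get n = some a → ρ.get (n + 1) = none} ∧
      M.R = {p | ∃ n, ρ.get n = some p.1 ∧ ρ.get (n + 1) = some p.2} ∧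
      ∀ t ξ b, M.L t ξ = some b ↔ b = true ∧ ξ = ψ ∧ ∃ n, ρ.get n = some t

/-- The minimal-counterexample condition `mC_M(s,φ)` (Table 2). -/
def mC (M : Model σ P F) (s : σ) : Formula P → Prop
  | .prop _ => False
  | .tt => False
  | .neg ψ => M.S = {s} ∧ M.C = ∅ ∧ M.R = ∅ ∧
      ∀ t ξ b, M.L t ξ = some b ↔ t = s ∧ ξ = ψ ∧ b = true
  | .or ψ₁ ψ₂ => M.S = {s} ∧ M.C = ∅ ∧ M.R = ∅ ∧
      ∀ t ξ b, M.L t ξ = some b ↔ t = s ∧ (ξ = ψ₁ ∨ ξ = ψ₂) ∧ b = false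
  | .EX ψ => ∃ T : Set σ, M.S = {s} ∪ T ∧ M.C = {s} ∧
      M.R = {p | p.1 = s ∧ p.2 ∈ T} ∧
      ∀ t ξ b, M.L t ξ = some b ↔ t ∈ T ∧ ξ = ψ ∧ b = false
  | .EU ψ₁ ψ₂ => s ∈ M.S ∧
      (∀ a ∈ M.S, Relation.ReflTransGen (fun x y => (x, y) ∈ M.R) s a) ∧
      M.S \ M.terminal ⊆ M.C ∧
      ∀ t ξ b, M.L t ξ = some b ↔
        b = false ∧ t ∈ M.S ∧ (ξ = ψ₂ ∨ (ξ = ψ₁ ∧ t ∉ M.C))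
  | .EG ψ => M.S.Finite ∧ Acyclic M.R ∧
      {a ∈ M.S | ∀ b, (b, a) ∉ M.R} = {s} ∧
      M.C = M.S \ M.terminal ∧
      ∀ t ξ b, M.L t ξ = some b ↔ b = false ∧ ξ = ψ ∧ t ∈ M.terminal

open Classical in
/-- The model obtained from `M` by restricting the labelling to the formulas in `G`. -/
noncomputable def restrictL (M : Model σ P F) (G : Set (Formula P)) : Model σ P F where
  S := M.S
  C := M.C
  R := M.R
  L := fun t ψ => if ψ ∈ G then M.L t ψ else none
  countable_S := M.countable_S
  C_sub := M.C_sub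
  R_sub := M.R_sub
  L_dom := by
    intro t ψ h
    try dsimp only at h
    by_cases hg : ψ ∈ G
    · rw [if_pos hg] at h
      exact M.L_dom t ψ h
    · rw [if_neg hg] at h
      exact absurd rfl h

open Classical in
/-- The restriction `M|s` of `M` to the states R-reachable from `s`. -/
noncomputable def restrictReach (M : Model σ P F) (s : σ) : Model σ P F where
  S := {t ∈ M.S | Relation.ReflTransGen (fun x y => (x, y) ∈ M.R) s t}
  C := {t ∈ M.C | Relation.ReflTransGen (fun x y => (x, y) ∈ M.R) s t}
  R := {p ∈ M.R | Relation.ReflTransGen (fun x y => (x, y) ∈ M.R) s p.1}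
  L := fun t ψ =>
    if Relation.ReflTransGen (fun x y => (x, y) ∈ M.R) s t then M.L t ψ else none
  countable_S := M.countable_S.mono fun t ht => ht.1
  C_sub := fun t ht => ⟨M.C_sub ht.1, ht.2⟩
  R_sub := fun p hp =>
    ⟨⟨(M.R_sub p hp.1).1, hp.2⟩, ⟨(M.R_sub p hp.1).2, hp.2.tail hp.1⟩⟩
  L_dom := by
    intro t ψ h
    try dsimp only at h
    by_cases hg : Relation.ReflTransGen (fun x y => (x, y) ∈ M.R) s t
    · rw [if_pos hg] at h
      exact ⟨⟨(M.L_dom t ψ h).1, hg⟩, (M.L_dom t ψ h).2⟩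
    · rw [if_neg hg] at h
      exact absurd rfl h

end Model

/-- Natural evidence (for an EU- or EG-assertion): evidence whose labelling is defined
on every child of the formula at every non-R-maximal state. -/
def NaturalEvidence {σ P : Type} {F : Set (Formula P)} (M : Model σ P F)
    (s : σ) (φ : Formula P) (b : Bool) : Prop :=
  Evidence M s φ b ∧ Formula.IsEUorEG φ ∧
  ∀ t ∈ M.S, (∃ u, (t, u) ∈ M.R) → ∀ ψ ∈ Formula.children φ, M.L t ψ ≠ none

/-- Minimal natural evidence: natural evidence none of whose proper submodels is
natural evidence for the same assertion. -/
def MinNaturalEvidence {σ P : Type} {F : Set (Formula P)} (M : Model σ P F)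
    (s : σ) (φ : Formula P) (b : Bool) : Prop :=
  NaturalEvidence M s φ b ∧
  ∀ N : Model σ P F, ProperSubmodel N M → ¬ NaturalEvidence N s φ b

/-- A set `G` of formulas is constrained (relative to `F` and the state universe `σ`)
if there exists an inconsistent model over `F` whose labelling domain is contained
in `S × G`. -/
def Constrained (σ : Type) {P : Type} (F : Set (Formula P)) (G : Set (Formula P)) : Prop :=
  ∃ M : Model σ P F, (∀ t ψ, M.L t ψ ≠ none → ψ ∈ G) ∧ ¬ Consistent M

/-- A proof over `F`: a model `N` together with a map `π` assigning to every compound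
assertion `(s,φ,b)` of `N` a submodel of `N` that is evidence for it. -/
def IsProof {σ P : Type} {F : Set (Formula P)} (N : Model σ P F)
    (π : σ → Formula P → Bool → Model σ P F) : Prop :=
  ∀ s φ b, N.L s φ = some b → Formula.Compound φ →
    Submodel (π s φ b) N ∧ Evidence (π s φ b) s φ b

/-!
If `M ⊑ N` with `N` sound, then `N` itself is a proof: the restriction of its labelling to
the children of `φ` is evidence for `(s, φ, L_N(s,φ))`. Indeed all states of `N` are closed,
so a sound supermodel has exactly the same maximal paths from `s` and, by soundness of both
models, agrees with `N` on the children of `φ`; hence it satisfies `φ` at `s` iff `N` does.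

Conversely, if `⟨N, π⟩` is a proof, close all states of `N` and relabel every formula by its
CTL truth in `N`. This model is sound, and by induction on formulas it extends `N`: the
evidence `π(s, φ, b) ⊑ N` embeds into it, so by the induction hypothesis on the children it
forces the label `b`.
-/

namespace Formula

variable {P : Type}

theorem eq_prop_or_compound (φ : Formula P) : (∃ p, φ = .prop p) ∨ φ.Compound := by
  cases φ <;> simp [Compound]

theorem induction_on_children {motive : Formula P → Prop}
    (h : ∀ φ, (∀ ψ ∈ φ.children, motive ψ) → motive φ) (φ : Formula P) : motive φ := by
  induction φ <;> apply h <;> simp_all [children]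

end Formula

section

variable {σ P : Type} {F : Set (Formula P)}

theorem Submodel.trans {A B C : Model σ P F} (hAB : Submodel A B) (hBC : Submodel B C) :
    Submodel A C := by
  obtain ⟨hS₁, hC₁, hR₁, hL₁, hT₁⟩ := hAB
  obtain ⟨hS₂, hC₂, hR₂, hL₂, hT₂⟩ := hBC
  refine ⟨hS₁.trans hS₂, hC₁.trans hC₂, hR₁.trans hR₂, fun s φ b h => hL₂ _ _ _ (hL₁ _ _ _ h),
    fun p hp hpA => ?_⟩
  by_cases hpB : p ∈ B.R
  · exact hT₁ p hpB hpA
  · exact fun hC => hT₂ p hp hpB (hC₁ hC)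

namespace Model

theorem isPath_iff_of_closed {A B : Model σ P F} (hS : A.S ⊆ B.S) (hR : A.R ⊆ B.R)
    (hclosed : ∀ t ∈ A.S, ∀ u, (t, u) ∈ B.R → (t, u) ∈ A.R) {s : σ} (hs : s ∈ A.S)
    (ρ : FSeq σ) : A.IsPath s ρ ↔ B.IsPath s ρ := by
  refine ⟨fun ⟨h0, hst, hrel⟩ => ⟨h0, fun n a ha => hS (hst n a ha),
    fun n a b ha hb => hR (hrel n a b ha hb)⟩, fun ⟨h0, _, hrel⟩ => ?_⟩
  have hmem : ∀ n a, ρ.get n = some a → a ∈ A.S := by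
    intro n
    induction n with
    | zero => intro a ha; rw [h0, Option.some_inj] at ha; exact ha ▸ hs
    | succ n ih =>
      intro a ha
      obtain ⟨a', ha'⟩ := Option.ne_none_iff_exists'.mp fun h => by simp [ρ.down n h] at ha
      exact (A.R_sub _ (hclosed a' (ih a' ha') a (hrel n a' a ha' ha))).2
  exact ⟨h0, hmem, fun n a b ha hb => hclosed a (hmem n a ha) b (hrel n a b ha hb)⟩

theorem isMaxPath_iff_of_closed {A B : Model σ P F} (hS : A.S ⊆ B.S) (hR : A.R ⊆ B.R)
    (hclosed : ∀ t ∈ A.S, ∀ u, (t, u) ∈ B.R → (t, u) ∈ A.R) {s : σ} (hs : s ∈ A.S)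
    (ρ : FSeq σ) : A.IsMaxPath s ρ ↔ B.IsMaxPath s ρ := by
  have hpath := isPath_iff_of_closed hS hR hclosed hs
  simp only [IsMaxPath, hpath]

theorem sat_iff_of_children {A B : Model σ P F} {s : σ} {φ : Formula P} (hφ : φ.Compound)
    (hs : s ∈ A.S) (hsucc : B.succ s = A.succ s) (hmax : ∀ ρ, A.IsMaxPath s ρ ↔ B.IsMaxPath s ρ)
    (hchild : ∀ ψ ∈ φ.children, ∀ t ∈ A.S, A.Sat ψ t ↔ B.Sat ψ t) :
    A.Sat φ s ↔ B.Sat φ s := by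
  have hpath : ∀ ψ ∈ φ.children, ∀ ρ, A.IsMaxPath s ρ → ∀ n a, ρ.get n = some a →
      (A.Sat ψ a ↔ B.Sat ψ a) :=
    fun ψ hψ ρ hρ n a ha => hchild ψ hψ a (hρ.1.2.1 n a ha)
  cases φ with
  | prop p => exact hφ.elim
  | tt => exact Iff.rfl
  | neg ψ => exact not_congr (hchild ψ rfl s hs)
  | or ψ₁ ψ₂ =>
    exact or_congr (hchild ψ₁ (by simp [Formula.children]) s hs)
      (hchild ψ₂ (by simp [Formula.children]) s hs)
  | EX ψ =>
    simp only [Sat, hsucc]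
    exact exists_congr fun t => and_congr_right fun ht => hchild ψ rfl t (A.R_sub _ ht).2
  | EU ψ₁ ψ₂ =>
    refine exists_congr fun ρ => ?_
    rw [← hmax ρ]
    refine and_congr_right fun hρ => exists_congr fun n => exists_congr fun b =>
      and_congr_right fun hb => and_congr (hpath ψ₂ (by simp [Formula.children]) ρ hρ n b hb) ?_
    exact forall₄_congr fun i _ a ha => hpath ψ₁ (by simp [Formula.children]) ρ hρ i a ha
  | EG ψ =>
    refine exists_congr fun ρ => ?_
    rw [← hmax ρ]
    exact and_congr_right fun hρ => forall₃_congr fun n a ha => hpath ψ rfl ρ hρ n a ha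

theorem sat_congr {A B : Model σ P F} (hS : A.S = B.S) (hR : A.R = B.R)
    (hprop : ∀ t ∈ A.S, ∀ p, A.L t (.prop p) = some true ↔ B.L t (.prop p) = some true)
    (φ : Formula P) : ∀ t ∈ A.S, A.Sat φ t ↔ B.Sat φ t := by
  induction φ using Formula.induction_on_children with
  | h φ ih =>
    intro t ht
    rcases φ.eq_prop_or_compound with ⟨p, rfl⟩ | hφ
    · exact hprop t ht p
    · exact sat_iff_of_children hφ ht (by simp only [succ, hR])
        (isMaxPath_iff_of_closed hS.le hR.le (fun _ _ _ h => hR ▸ h) ht) ih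

open Classical in
theorem Sound.label_eq {M : Model σ P F} (hM : M.Sound) {s : σ} {φ : Formula P}
    (hs : s ∈ M.S) (hφ : φ ∈ F) : M.L s φ = some (decide (M.Sat φ s)) := by
  obtain ⟨b, hb⟩ := Option.ne_none_iff_exists'.mp (hM.1.2 s hs φ hφ)
  have hsat := hM.2 s hs φ hφ
  rw [hb] at hsat ⊢
  cases b <;> simp_all

theorem restrictL_submodel (M : Model σ P F) (G : Set (Formula P)) :
    Submodel (M.restrictL G) M := by
  refine ⟨subset_rfl, subset_rfl, subset_rfl, fun s φ b h => ?_, fun p hp hnp => (hnp hp).elim⟩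
  by_cases hφ : φ ∈ G
  · exact (if_pos hφ).symm.trans h
  · exact absurd ((if_neg hφ).symm.trans h) (by simp)

theorem restrictL_L_of_mem (M : Model σ P F) {G : Set (Formula P)} {φ : Formula P}
    (hφ : φ ∈ G) (s : σ) : (M.restrictL G).L s φ = M.L s φ :=
  if_pos hφ

theorem mem_of_restrictL_L_ne_none (M : Model σ P F) {G : Set (Formula P)} {s : σ}
    {φ : Formula P} (h : (M.restrictL G).L s φ ≠ none) : φ ∈ G := by
  by_contra hφ
  exact h (if_neg hφ)

end Model

theorem evidence_restrictL_children {N : Model σ P F} (hF : SubformulaClosed F)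
    (hN : N.Sound) {s : σ} {φ : Formula P} {b : Bool} (hL : N.L s φ = some b)
    (hφ : φ.Compound) : Evidence (N.restrictL φ.children) s φ b := by
  obtain ⟨hs, hφF⟩ := N.L_dom s φ (by simp [hL])
  refine ⟨⟨N, hN, N.restrictL_submodel _⟩, fun t ψ => N.mem_of_restrictL_L_ne_none, ?_⟩
  intro N' hN' hsub
  have hS : N.S ⊆ N'.S := hsub.1
  have hR : N.R ⊆ N'.R := hsub.2.2.1
  have hclosed : ∀ t ∈ N.S, ∀ u, (t, u) ∈ N'.R → (t, u) ∈ N.R := by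
    intro t ht u htu
    by_contra hnew
    exact hsub.2.2.2.2 _ htu hnew (hN.1.1.symm ▸ ht)
  have hchild : ∀ ψ ∈ φ.children, ∀ t ∈ N.S, N.Sat ψ t ↔ N'.Sat ψ t := by
    intro ψ hψ t ht
    have hψF : ψ ∈ F := hF φ hφF hψ
    have hlabel := hsub.2.2.2.1 t ψ _ ((N.restrictL_L_of_mem hψ t).trans (hN.label_eq ht hψF))
    rw [hN'.label_eq (hS ht) hψF, Option.some_inj, decide_eq_decide] at hlabel
    exact hlabel.symm
  have hsat := Model.sat_iff_of_children hφ hs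
    (Set.ext fun u => ⟨hclosed s hs u, fun h => hR h⟩)
    (Model.isMaxPath_iff_of_closed hS hR hclosed hs) hchild
  rw [hN'.label_eq (hS hs) hφF, ← hsat, ← hN.label_eq hs hφF, hL]

namespace Model

open Classical in
/-- `N.Sat` reads only the propositional labels of `N`, an unlabelled proposition counting
as false; so the labels of `N` on compound formulas play no role here. -/
noncomputable def completion (N : Model σ P F) : Model σ P F where
  S := N.S
  C := N.S
  R := N.R
  L s φ := if s ∈ N.S ∧ φ ∈ F then some (decide (N.Sat φ s)) else none
  countable_S := N.countable_S
  C_sub := subset_rfl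
  R_sub := N.R_sub
  L_dom s φ h := by
    by_contra hd
    exact h (if_neg hd)

open Classical in
theorem completion_L_of_mem (N : Model σ P F) {s : σ} {φ : Formula P} (hs : s ∈ N.S)
    (hφ : φ ∈ F) : N.completion.L s φ = some (decide (N.Sat φ s)) :=
  if_pos ⟨hs, hφ⟩

open Classical in
theorem completion_sat_iff (N : Model σ P F) (φ : Formula P) :
    ∀ t ∈ N.S, N.completion.Sat φ t ↔ N.Sat φ t := by
  refine sat_congr (A := N.completion) (B := N) rfl rfl (fun t ht p => ?_) φ
  by_cases hp : Formula.prop p ∈ F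
  · rw [completion_L_of_mem N ht hp, Option.some_inj]
    exact decide_eq_true_iff
  · have hN : N.L t (.prop p) = none := by
      by_contra h
      exact hp (N.L_dom t _ h).2
    have hC : N.completion.L t (.prop p) = none := by
      by_contra h
      exact hp (N.completion.L_dom t _ h).2
    simp [hN, hC]

theorem completion_sound (N : Model σ P F) : N.completion.Sound :=
  ⟨⟨rfl, fun s hs φ hφ => by simp [completion_L_of_mem N hs hφ]⟩, fun s hs φ hφ => by
    rw [completion_L_of_mem N hs hφ, completion_sat_iff N φ s hs]
    simp⟩

end Model

theorem IsProof.submodel_completion {N : Model σ P F}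
    {π : σ → Formula P → Bool → Model σ P F} (hπ : IsProof N π) : Submodel N N.completion := by
  have hL : ∀ s φ b, N.L s φ = some b → N.completion.L s φ = some b := by
    intro s φ
    induction φ using Formula.induction_on_children generalizing s with
    | h φ ih =>
      intro b h
      obtain ⟨hs, hφF⟩ := N.L_dom s φ (by simp [h])
      rcases φ.eq_prop_or_compound with ⟨p, rfl⟩ | hφ
      · rw [N.completion_L_of_mem hs hφF]
        cases b <;> simp [Model.Sat, h]
      · obtain ⟨⟨hS, hC, hR, hLπ, hT⟩, hev⟩ := hπ s φ b h hφ
        refine hev.2.2 _ N.completion_sound ⟨hS, hC.trans N.C_sub, hR, ?_, hT⟩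
        intro t ψ c hc
        exact ih ψ (hev.2.1 t ψ (by simp [hc])) t c (hLπ t ψ c hc)
  exact ⟨subset_rfl, N.C_sub, subset_rfl, hL, fun p hp hnp => (hnp hp).elim⟩

end

theorem consistent_iff_submodel_of_proof_general {σ P : Type} {F : Set (Formula P)}
    (hF : SubformulaClosed F) (M : Model σ P F) :
    Consistent M ↔ ∃ (N : Model σ P F) (π : σ → Formula P → Bool → Model σ P F),
      IsProof N π ∧ Submodel M N := by
  constructor
  · rintro ⟨N, hN, hMN⟩
    exact ⟨N, fun _ φ _ => N.restrictL φ.children,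
      fun _ _ _ hL hφ => ⟨N.restrictL_submodel _, evidence_restrictL_children hF hN hL hφ⟩, hMN⟩
  · rintro ⟨N, π, hπ, hMN⟩
    exact ⟨N.completion, N.completion_sound, hMN.trans hπ.submodel_completion⟩

/-- A model `M` over `F` is consistent iff `M ⊑ N` for some proof
`⟨N,π⟩` over `F`. -/
theorem consistent_iff_submodel_of_proof {σ P : Type} [Countable P] {F : Set (Formula P)}
    (hF : SubformulaClosed F) (M : Model σ P F) :
    Consistent M ↔ ∃ (N : Model σ P F) (π : σ → Formula P → Bool → Model σ P F),
      IsProof N π ∧ Submodel M N :=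
  consistent_iff_submodel_of_proof_general hF M

end CTLviz
end

section
/- Let F be a subformula-closed set of CTL formulas and let M ⊑ N be models over F. For all states s of M and compound formulas φ ∈ F: if W_M(s,φ) holds then W_N(s,φ) holds, and if C_M(s,φ) holds then C_N(s,φ) holds. -/
namespace CTLviz

/-!
Labels, closed states and transitions only grow from `M` to `N`, which settles the local
operators. A witness path for `EU` is a path of `N` and extends greedily to a maximal one;
a witness path for `EG` ends in a closed state of `M`, whose successors in `N` are those in `M`,
so it stays maximal. For counterexamples the point is that every maximal path of `N` agrees
with some maximal path of `M` for as long as the latter runs through closed states of `M`.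
-/

namespace FSeq

variable {σ : Type}

lemma get_eq_none_of_le (ρ : FSeq σ) {i j : ℕ} (hij : i ≤ j) (h : ρ.get i = none) :
    ρ.get j = none := by
  induction j, hij using Nat.le_induction with
  | base => exact h
  | succ n _ ih => exact ρ.down n ih

lemma exists_get_eq_some_of_le (ρ : FSeq σ) {i n : ℕ} {a : σ} (hin : i ≤ n)
    (h : ρ.get n = some a) : ∃ b, ρ.get i = some b :=
  Option.ne_none_iff_exists'.mp fun hi => by simp [ρ.get_eq_none_of_le hin hi] at h

lemma IsPrefix.get_eq_of_le {ρ ρ' : FSeq σ} (hp : ρ.IsPrefix ρ') {i n : ℕ} {a : σ}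
    (hin : i ≤ n) (h : ρ.get n = some a) : ρ'.get i = ρ.get i := by
  obtain ⟨b, hb⟩ := ρ.exists_get_eq_some_of_le hin h
  rw [hb, hp i b hb]

/-- The prefix of `ρ` consisting of the positions `0, …, k`. -/
def upTo (ρ : FSeq σ) (k : ℕ) : FSeq σ where
  get i := if i ≤ k then ρ.get i else none
  down n hn := by
    by_cases h : n + 1 ≤ k
    · rw [if_pos (by omega)] at hn
      simp [h, ρ.down n hn]
    · simp [h]

lemma upTo_get_of_le (ρ : FSeq σ) {i k : ℕ} (h : i ≤ k) : (ρ.upTo k).get i = ρ.get i :=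
  if_pos h

lemma upTo_get_succ {ρ : FSeq σ} {k n : ℕ} {b : σ} (h : (ρ.upTo k).get (n + 1) = some b) :
    n < k ∧ ρ.get (n + 1) = some b := by
  by_cases hn : n + 1 ≤ k
  · exact ⟨hn, by rwa [upTo_get_of_le ρ hn] at h⟩
  · simp [upTo, hn] at h

end FSeq

namespace Model

variable {σ P : Type} {F : Set (Formula P)} {M : Model σ P F} {s : σ} {ρ : FSeq σ}

lemma isPath_of_forall_mem_R (h0 : ρ.get 0 = some s) (hs : s ∈ M.S)
    (hR : ∀ n a b, ρ.get n = some a → ρ.get (n + 1) = some b → (a, b) ∈ M.R) :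
    M.IsPath s ρ := by
  refine ⟨h0, fun n => ?_, hR⟩
  cases n with
  | zero => intro a ha; rw [h0] at ha; cases ha; exact hs
  | succ n =>
    intro b hb
    obtain ⟨a, ha⟩ := ρ.exists_get_eq_some_of_le n.le_succ hb
    exact (M.R_sub _ (hR n a b ha hb)).2

lemma IsPath.isMaxPath_of_last (hp : M.IsPath s ρ)
    (hlast : ∀ n a, ρ.get n = some a → ρ.get (n + 1) = none → ∀ b, (a, b) ∉ M.R) :
    M.IsMaxPath s ρ := by
  refine ⟨hp, fun ρ' hp' hpre => FSeq.ext' fun n => ?_⟩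
  induction n with
  | zero => rw [hp'.1, hp.1]
  | succ n ih =>
    cases hn : ρ.get (n + 1) with
    | some a => exact hpre _ _ hn
    | none =>
      cases hn' : ρ'.get (n + 1) with
      | none => rfl
      | some b =>
        obtain ⟨a, ha⟩ := ρ'.exists_get_eq_some_of_le n.le_succ hn'
        rw [ih] at ha
        exact absurd (hp'.2.2 n a b (hpre n a ha) hn') (hlast n a ha hn b)

open Classical in
noncomputable def next (M : Model σ P F) (a : σ) : Option σ :=
  if h : ∃ b, (a, b) ∈ M.R then some h.choose else none

lemma mem_R_of_next_eq_some {a b : σ} (h : M.next a = some b) : (a, b) ∈ M.R := by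
  unfold next at h
  split_ifs at h with hex
  cases h
  exact hex.choose_spec

lemma next_eq_none_iff {a : σ} : M.next a = none ↔ ∀ b, (a, b) ∉ M.R := by
  unfold next
  split_ifs with hex
  · simpa using hex
  · simpa using hex

noncomputable def extendGet (M : Model σ P F) (ρ : FSeq σ) : ℕ → Option σ
  | 0 => ρ.get 0
  | n + 1 => (ρ.get (n + 1)).or ((extendGet M ρ n).bind M.next)

lemma extendGet_of_get_eq_some {n : ℕ} {a : σ} (h : ρ.get n = some a) :
    M.extendGet ρ n = some a := by
  cases n with
  | zero => exact h
  | succ n => simp [extendGet, h]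

lemma get_eq_none_of_extendGet_eq_none {n : ℕ} (h : M.extendGet ρ n = none) :
    ρ.get n = none :=
  Option.eq_none_iff_forall_ne_some.mpr fun a ha => by
    simp [extendGet_of_get_eq_some ha] at h

noncomputable def extend (M : Model σ P F) (ρ : FSeq σ) : FSeq σ where
  get := M.extendGet ρ
  down n h := by simp [extendGet, ρ.down n (get_eq_none_of_extendGet_eq_none h), h]

lemma isPrefix_extend (M : Model σ P F) (ρ : FSeq σ) : ρ.IsPrefix (M.extend ρ) :=
  fun _ _ => extendGet_of_get_eq_some

lemma extend_get_succ {n : ℕ} (h : ρ.get (n + 1) = none) :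
    (M.extend ρ).get (n + 1) = ((M.extend ρ).get n).bind M.next := by
  simp [extend, extendGet, h]

lemma IsPath.isMaxPath_extend (hp : M.IsPath s ρ) : M.IsMaxPath s (M.extend ρ) := by
  have hR : ∀ n a b, (M.extend ρ).get n = some a → (M.extend ρ).get (n + 1) = some b →
      (a, b) ∈ M.R := by
    intro n a b ha hb
    cases hn : ρ.get (n + 1) with
    | some c =>
      obtain ⟨a', ha'⟩ := ρ.exists_get_eq_some_of_le n.le_succ hn
      rw [M.isPrefix_extend ρ n a' ha', Option.some_inj] at ha
      rw [M.isPrefix_extend ρ _ c hn, Option.some_inj] at hb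
      subst ha hb
      exact hp.2.2 n a' c ha' hn
    | none =>
      rw [extend_get_succ hn, ha] at hb
      exact mem_R_of_next_eq_some hb
  have hpath := isPath_of_forall_mem_R (M.isPrefix_extend ρ 0 s hp.1) (hp.2.1 0 s hp.1) hR
  refine hpath.isMaxPath_of_last ?_
  intro n a ha hn
  have hρ : ρ.get (n + 1) = none := get_eq_none_of_extendGet_eq_none hn
  rw [extend_get_succ hρ, ha] at hn
  exact next_eq_none_iff.mp hn

lemma IsMaxPath.not_mem_R_of_last (hρ : M.IsMaxPath s ρ) {n : ℕ} {a b : σ}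
    (ha : ρ.get n = some a) (hn : ρ.get (n + 1) = none) : (a, b) ∉ M.R := by
  intro hab
  have hext : (M.extend ρ).get (n + 1) = M.next a := by
    rw [extend_get_succ hn, M.isPrefix_extend ρ n a ha, Option.bind_some]
  have hnext : M.next a ≠ none := fun h => next_eq_none_iff.mp h b hab
  rw [hρ.2 _ hρ.1.isMaxPath_extend.1 (M.isPrefix_extend ρ), hn] at hext
  exact hnext hext.symm

end Model

namespace Submodel

variable {σ P : Type} {F : Set (Formula P)} {M N : Model σ P F} {s : σ} {ρ : FSeq σ}

lemma mem_R_of_fst_mem_C (h : Submodel M N) {a b : σ} (ha : a ∈ M.C) (hab : (a, b) ∈ N.R) :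
    (a, b) ∈ M.R := by
  by_contra hM
  exact h.2.2.2.2 (a, b) hab hM ha

lemma isPath (h : Submodel M N) (hp : M.IsPath s ρ) : N.IsPath s ρ :=
  ⟨hp.1, fun n a ha => h.1 (hp.2.1 n a ha), fun n a b ha hb => h.2.2.1 (hp.2.2 n a b ha hb)⟩

lemma isMaxPath_of_last_mem_C (h : Submodel M N) (hρ : M.IsMaxPath s ρ)
    (hlast : ∀ n a, ρ.get n = some a → ρ.get (n + 1) = none → a ∈ M.C) :
    N.IsMaxPath s ρ :=
  (h.isPath hρ.1).isMaxPath_of_last fun n a ha hn _ hab =>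
    hρ.not_mem_R_of_last ha hn (h.mem_R_of_fst_mem_C (hlast n a ha hn) hab)

/-- Up to the first transition leaving `M`, which starts outside `M.C`, a maximal path of `N`
is a path of `M`; extending that part greedily gives the path of `M` sought. -/
lemma exists_isMaxPath_eq_while_mem_C (h : Submodel M N) (hs : s ∈ M.S)
    (hρ : N.IsMaxPath s ρ) :
    ∃ ρ', M.IsMaxPath s ρ' ∧
      ∀ n, (∀ i < n, ∀ a, ρ'.get i = some a → a ∈ M.C) → ρ.get n = ρ'.get n := by
  classical
  by_cases hleave : ∃ k a b, ρ.get k = some a ∧ ρ.get (k + 1) = some b ∧ (a, b) ∉ M.R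
  · obtain ⟨a, b, ha, hb, hab⟩ := Nat.find_spec hleave
    set k := Nat.find hleave
    have haC : a ∉ M.C := fun haC => hab (h.mem_R_of_fst_mem_C haC (hρ.1.2.2 k a b ha hb))
    have hpath : M.IsPath s (ρ.upTo k) := by
      refine M.isPath_of_forall_mem_R ((ρ.upTo_get_of_le k.zero_le).trans hρ.1.1) hs ?_
      intro i c d hc hd
      obtain ⟨hik, hd⟩ := FSeq.upTo_get_succ hd
      rw [ρ.upTo_get_of_le hik.le] at hc
      by_contra hcd
      exact Nat.find_min hleave hik ⟨c, d, hc, hd, hcd⟩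
    have hpre := M.isPrefix_extend (ρ.upTo k)
    have hka : (ρ.upTo k).get k = some a := (ρ.upTo_get_of_le le_rfl).trans ha
    refine ⟨_, hpath.isMaxPath_extend, fun n hn => ?_⟩
    have hnk : n ≤ k := by
      by_contra hkn
      exact haC (hn k (by omega) a (hpre k a hka))
    rw [hpre.get_eq_of_le hnk hka, ρ.upTo_get_of_le hnk]
  · push Not at hleave
    have hpath : M.IsPath s ρ := M.isPath_of_forall_mem_R hρ.1.1 hs hleave
    refine ⟨ρ, hpath.isMaxPath_of_last fun n a ha hn b hab => ?_, fun _ _ => rfl⟩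
    exact hρ.not_mem_R_of_last ha hn (h.2.2.1 hab)

lemma W_mono (h : Submodel M N) {φ : Formula P} (hw : M.W s φ) : N.W s φ := by
  have ⟨_, hC, hR, hL, _⟩ := h
  cases φ with
  | prop _ => exact hw.elim
  | tt => trivial
  | neg _ => exact hL _ _ _ hw
  | or _ _ => exact hw.imp (hL _ _ _) (hL _ _ _)
  | EX _ =>
    obtain ⟨t, ht, hl⟩ := hw
    exact ⟨t, hR ht, hL _ _ _ hl⟩
  | EU ψ₁ ψ₂ =>
    obtain ⟨ρ, hρ, n, b, hb, h₂, h₁⟩ := hw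
    have hpre := N.isPrefix_extend ρ
    refine ⟨_, (h.isPath hρ.1).isMaxPath_extend, n, b, hpre n b hb, hL _ _ _ h₂, ?_⟩
    intro i hi a ha
    rw [hpre.get_eq_of_le hi.le hb] at ha
    exact hL _ _ _ (h₁ i hi a ha)
  | EG ψ =>
    obtain ⟨ρ, hρ, hl, hlast⟩ := hw
    exact ⟨ρ, h.isMaxPath_of_last_mem_C hρ hlast, fun n a ha => hL _ _ _ (hl n a ha),
      fun n a ha hn => hC (hlast n a ha hn)⟩

lemma Cc_mono (h : Submodel M N) (hs : s ∈ M.S) {φ : Formula P} (hc : M.Cc s φ) :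
    N.Cc s φ := by
  have ⟨_, hC, _, hL, _⟩ := h
  cases φ with
  | prop _ => exact hc.elim
  | tt => exact hc.elim
  | neg _ => exact hL _ _ _ hc
  | or _ _ => exact ⟨hL _ _ _ hc.1, hL _ _ _ hc.2⟩
  | EX _ =>
    obtain ⟨hsC, hall⟩ := hc
    exact ⟨hC hsC, fun t ht => hL _ _ _ (hall t (h.mem_R_of_fst_mem_C hsC ht))⟩
  | EU ψ₁ ψ₂ =>
    intro ρ hρ
    obtain ⟨ρ', hρ', heq⟩ := h.exists_isMaxPath_eq_while_mem_C hs hρ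
    rcases hc ρ' hρ' with hall | ⟨n, b, hb, h₁, h₂, hpre⟩
    · obtain rfl : ρ = ρ' := FSeq.ext' fun n => heq n fun i _ a ha => (hall i a ha).1
      exact Or.inl fun n a ha => ⟨hC (hall n a ha).1, hL _ _ _ (hall n a ha).2⟩
    · have heq' : ∀ i ≤ n, ρ.get i = ρ'.get i := fun i hi =>
        heq i fun j hj a ha => (hpre j (hj.trans_le hi) a ha).1
      refine Or.inr ⟨n, b, (heq' n le_rfl).trans hb, hL _ _ _ h₁, hL _ _ _ h₂, ?_⟩
      intro i hi a ha
      rw [heq' i hi.le] at ha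
      exact ⟨hC (hpre i hi a ha).1, hL _ _ _ (hpre i hi a ha).2⟩
  | EG ψ =>
    intro ρ hρ
    obtain ⟨ρ', hρ', heq⟩ := h.exists_isMaxPath_eq_while_mem_C hs hρ
    obtain ⟨n, b, hb, hl, hpre⟩ := hc ρ' hρ'
    have heq' : ∀ i ≤ n, ρ.get i = ρ'.get i := fun i hi =>
      heq i fun j hj a ha => hpre j (hj.trans_le hi) a ha
    refine ⟨n, b, (heq' n le_rfl).trans hb, hL _ _ _ hl, fun i hi a ha => ?_⟩
    rw [heq' i hi.le] at ha
    exact hC (hpre i hi a ha)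

end Submodel

theorem W_C_upward_closed_general {σ P : Type} {F : Set (Formula P)}
    (M N : Model σ P F) (h : Submodel M N)
    (s : σ) (hs : s ∈ M.S) (φ : Formula P) :
    (M.W s φ → N.W s φ) ∧ (M.Cc s φ → N.Cc s φ) :=
  ⟨h.W_mono, h.Cc_mono hs⟩

/-- If `M ⊑ N`, then `W_M(s,φ)` implies `W_N(s,φ)` and `C_M(s,φ)`
implies `C_N(s,φ)`. -/
theorem W_C_upward_closed {σ P : Type} [Countable P] {F : Set (Formula P)}
    (hF : SubformulaClosed F) (M N : Model σ P F) (h : Submodel M N)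
    (s : σ) (hs : s ∈ M.S) (φ : Formula P) (hφ : φ ∈ F) (hcomp : Formula.Compound φ) :
    (M.W s φ → N.W s φ) ∧ (M.Cc s φ → N.Cc s φ) :=
  W_C_upward_closed_general M N h s hs φ

end CTLviz
end
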